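/- arXiv:2209.10244 — 6 statements merged into one kernel-verified Lean document; each statement's English description precedes it below -/
import Mathlib

section
/- (Stability LMI constraints for VIC.) Let A_1, …, A_n be real m×m matrices and suppose there exists a real symmetric positive definite m×m matrix P satisfying A_iᵀ P A_i ⪯ P for every i = 1, …, n. Then the equilibrium x = 0 of the discrete-time polytopic LPV system is stable in the sense of Lyapunov: for every ε > 0 there exists δ > 0 such that every trajectory x of the system with ‖x(0)‖ < δ satisfies ‖x(k)‖ < ε for all k ∈ ℕ. -/
/-!
The Lyapunov function is the norm `v ↦ ‖B v‖` for a factorisation `P = Bᵀ B`, whose square is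
`vᵀ P v`. The LMI says that each vertex `A i` does not increase it; being a norm it is convex, so
neither does any convex combination of the vertices, and it is therefore non-increasing along
every trajectory. Since `B` is invertible, this norm is equivalent to the Euclidean one, which
gives `‖x k‖ ≤ ‖B⁻¹‖ ‖B‖ ‖x 0‖`, a uniform linear bound, and hence stability.
-/

open Matrix BigOperators

/-- The Euclidean norm of a vector in `ℝ^m`. -/
noncomputable def euclNorm {d : ℕ} (v : Fin d → ℝ) : ℝ :=
  ‖(EuclideanSpace.equiv (Fin d) ℝ).symm v‖

def IsPolytopicTrajectory {ι κ : Type*} [Fintype ι] [Fintype κ] (A : κ → Matrix ι ι ℝ)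
    (x : ℕ → ι → ℝ) : Prop :=
  ∀ k, ∃ h : κ → ℝ, (∀ i, 0 ≤ h i) ∧ (∑ i, h i = 1) ∧ x (k + 1) = (∑ i, h i • A i) *ᵥ x k

def IsLyapunovStable {α : Type*} (N : α → ℝ) (p : (ℕ → α) → Prop) : Prop :=
  ∀ ε > 0, ∃ δ > 0, ∀ x, p x → N (x 0) < δ → ∀ k, N (x k) < ε

lemma isLyapunovStable_of_le_mul {α : Type*} (N : α → ℝ) {p : (ℕ → α) → Prop} {C : ℝ}
    (hC : 0 ≤ C) (hbound : ∀ x, p x → ∀ k, N (x k) ≤ C * N (x 0)) : IsLyapunovStable N p := by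
  intro ε hε
  obtain ⟨δ, hδ, hCδ⟩ := exists_pos_mul_lt hε C
  refine ⟨δ, hδ, fun x hx hx0 k => ?_⟩
  calc N (x k) ≤ C * N (x 0) := hbound x hx k
    _ ≤ C * δ := mul_le_mul_of_nonneg_left hx0.le hC
    _ < ε := hCδ

namespace Matrix

variable {ι : Type*} [Fintype ι]

lemma norm_toLp_mulVec_sq (B : Matrix ι ι ℝ) (v : ι → ℝ) :
    ‖WithLp.toLp 2 (B *ᵥ v)‖ ^ 2 = v ⬝ᵥ (Bᵀ * B) *ᵥ v := by
  rw [EuclideanSpace.real_norm_sq_eq, ← mulVec_mulVec, dotProduct_mulVec, vecMul_transpose]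
  simp [dotProduct, sq]

lemma PosSemidef.dotProduct_mulVec_mulVec_le {P A : Matrix ι ι ℝ}
    (h : (P - Aᵀ * P * A).PosSemidef) (v : ι → ℝ) :
    A *ᵥ v ⬝ᵥ P *ᵥ (A *ᵥ v) ≤ v ⬝ᵥ P *ᵥ v := by
  have hv := h.dotProduct_mulVec_nonneg v
  rw [star_trivial, sub_mulVec, dotProduct_sub, sub_nonneg, ← mulVec_mulVec, ← mulVec_mulVec,
    dotProduct_mulVec v Aᵀ, vecMul_transpose] at hv
  exact hv

lemma norm_toLp_mulVec_mulVec_le {A B : Matrix ι ι ℝ}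
    (h : (Bᵀ * B - Aᵀ * (Bᵀ * B) * A).PosSemidef) (v : ι → ℝ) :
    ‖WithLp.toLp 2 (B *ᵥ (A *ᵥ v))‖ ≤ ‖WithLp.toLp 2 (B *ᵥ v)‖ := by
  refine (pow_le_pow_iff_left₀ (norm_nonneg _) (norm_nonneg _) two_ne_zero).mp ?_
  rw [norm_toLp_mulVec_sq, norm_toLp_mulVec_sq]
  exact h.dotProduct_mulVec_mulVec_le v

lemma norm_toLp_mulVec_sum_smul_mulVec_le {κ : Type*} [Fintype κ] {A : κ → Matrix ι ι ℝ}
    {B : Matrix ι ι ℝ} (hA : ∀ i v, ‖WithLp.toLp 2 (B *ᵥ (A i *ᵥ v))‖ ≤ ‖WithLp.toLp 2 (B *ᵥ v)‖)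
    {h : κ → ℝ} (h0 : ∀ i, 0 ≤ h i) (h1 : ∑ i, h i = 1) (v : ι → ℝ) :
    ‖WithLp.toLp 2 (B *ᵥ ((∑ i, h i • A i) *ᵥ v))‖ ≤ ‖WithLp.toLp 2 (B *ᵥ v)‖ := by
  have hmem := (convex_closedBall (0 : EuclideanSpace ℝ ι) ‖WithLp.toLp 2 (B *ᵥ v)‖).sum_mem
    (fun i _ => h0 i) h1 (z := fun i => WithLp.toLp 2 (B *ᵥ (A i *ᵥ v)))
    (fun i _ => mem_closedBall_zero_iff.mpr (hA i v))
  rw [mem_closedBall_zero_iff] at hmem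
  simpa [sum_mulVec, mulVec_sum, smul_mulVec, mulVec_smul] using hmem

variable [DecidableEq ι]

lemma norm_toLp_mulVec_le (B : Matrix ι ι ℝ) (v : ι → ℝ) :
    ‖WithLp.toLp 2 (B *ᵥ v)‖ ≤ ‖toEuclideanCLM (𝕜 := ℝ) B‖ * ‖WithLp.toLp 2 v‖ :=
  (toEuclideanCLM (𝕜 := ℝ) B).le_opNorm _

lemma norm_toLp_le_of_isUnit {B : Matrix ι ι ℝ} (hB : IsUnit B) (v : ι → ℝ) :
    ‖WithLp.toLp 2 v‖ ≤ ‖toEuclideanCLM (𝕜 := ℝ) B⁻¹‖ * ‖WithLp.toLp 2 (B *ᵥ v)‖ := by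
  have hv : B⁻¹ *ᵥ (B *ᵥ v) = v := by
    rw [mulVec_mulVec, nonsing_inv_mul _ ((isUnit_iff_isUnit_det B).mp hB), one_mulVec]
  simpa only [hv] using norm_toLp_mulVec_le B⁻¹ (B *ᵥ v)

open scoped MatrixOrder in
lemma PosDef.exists_isUnit_eq_transpose_mul_self {P : Matrix ι ι ℝ} (hP : P.PosDef) :
    ∃ B : Matrix ι ι ℝ, IsUnit B ∧ P = Bᵀ * B := by
  obtain ⟨B, rfl⟩ := CStarAlgebra.nonneg_iff_eq_star_mul_self.mp hP.posSemidef.nonneg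
  refine ⟨B, ?_, by rw [star_eq_conjTranspose, conjTranspose_eq_transpose_of_trivial]⟩
  rw [isUnit_iff_isUnit_det, isUnit_iff_ne_zero]
  intro hB
  simpa [hB] using hP.det_pos

end Matrix

lemma IsPolytopicTrajectory.norm_le {ι κ : Type*} [Fintype ι] [DecidableEq ι] [Fintype κ]
    {A : κ → Matrix ι ι ℝ} {B : Matrix ι ι ℝ} (hB : IsUnit B)
    (hA : ∀ i v, ‖WithLp.toLp 2 (B *ᵥ (A i *ᵥ v))‖ ≤ ‖WithLp.toLp 2 (B *ᵥ v)‖)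
    {x : ℕ → ι → ℝ} (hx : IsPolytopicTrajectory A x) (k : ℕ) :
    ‖WithLp.toLp 2 (x k)‖ ≤
      ‖toEuclideanCLM (𝕜 := ℝ) B⁻¹‖ * ‖toEuclideanCLM (𝕜 := ℝ) B‖ * ‖WithLp.toLp 2 (x 0)‖ := by
  have hanti : Antitone fun k => ‖WithLp.toLp 2 (B *ᵥ x k)‖ := by
    refine antitone_nat_of_succ_le fun k => ?_
    obtain ⟨h, h0, h1, hstep⟩ := hx k
    rw [hstep]
    exact norm_toLp_mulVec_sum_smul_mulVec_le hA h0 h1 (x k)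
  calc ‖WithLp.toLp 2 (x k)‖ ≤ ‖toEuclideanCLM (𝕜 := ℝ) B⁻¹‖ * ‖WithLp.toLp 2 (B *ᵥ x k)‖ :=
        norm_toLp_le_of_isUnit hB _
    _ ≤ ‖toEuclideanCLM (𝕜 := ℝ) B⁻¹‖ * ‖WithLp.toLp 2 (B *ᵥ x 0)‖ :=
        mul_le_mul_of_nonneg_left (hanti k.zero_le) (norm_nonneg _)
    _ ≤ ‖toEuclideanCLM (𝕜 := ℝ) B⁻¹‖ * (‖toEuclideanCLM (𝕜 := ℝ) B‖ * ‖WithLp.toLp 2 (x 0)‖) :=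
        mul_le_mul_of_nonneg_left (norm_toLp_mulVec_le B _) (norm_nonneg _)
    _ = _ := (mul_assoc _ _ _).symm

/-- Stability LMI constraints for VIC: if there is a symmetric positive definite `P`
with `A iᵀ * P * A i ⪯ P` for every vertex, then the equilibrium `x = 0` of the
discrete-time polytopic LPV system is stable in the sense of Lyapunov. -/
theorem polytopic_lpv_lyapunov_stable {m n : ℕ}
    (A : Fin n → Matrix (Fin m) (Fin m) ℝ)
    (P : Matrix (Fin m) (Fin m) ℝ) (hP : P.PosDef)
    (hLMI : ∀ i, (P - (A i)ᵀ * P * A i).PosSemidef) :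
    ∀ ε > 0, ∃ δ > 0, ∀ x : ℕ → Fin m → ℝ,
      (∀ k, ∃ h : Fin n → ℝ, (∀ i, 0 ≤ h i) ∧ (∑ i, h i = 1) ∧
        x (k + 1) = (∑ i, h i • A i) *ᵥ x k) →
      euclNorm (x 0) < δ → ∀ k, euclNorm (x k) < ε := by
  obtain ⟨B, hB, rfl⟩ := hP.exists_isUnit_eq_transpose_mul_self
  have hA i v := norm_toLp_mulVec_mulVec_le (hLMI i) v
  exact isLyapunovStable_of_le_mul euclNorm (p := IsPolytopicTrajectory A)
    (by positivity) fun x hx k => hx.norm_le hB hA k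
end

section
/- Let A_1, …, A_n be real m×m matrices and P a real symmetric positive definite m×m matrix satisfying A_iᵀ P A_i ⪯ P for every i. Then there exists a constant C > 0, depending only on P, such that every trajectory x of the discrete-time polytopic LPV system satisfies ‖x(k)‖ ≤ C · ‖x(0)‖ for all k ∈ ℕ. -/
/-! Factor `P = Sᵀ S` with `S` invertible. The vertex inequalities say that every `A i` is a
contraction for the norm `v ↦ ‖S v‖`, whose unit ball is convex, so every convex combination
of the `A i` is one as well. Hence `‖S x k‖` is non-increasing along any trajectory, and the
equivalence of `‖S ·‖` with the Euclidean norm turns this into `‖x k‖ ≤ ‖S⁻¹‖ ‖S‖ ‖x 0‖`. -/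

open Matrix BigOperators

open scoped Matrix.Norms.L2Operator

lemma euclNorm_nonneg {d : ℕ} (v : Fin d → ℝ) : 0 ≤ euclNorm v :=
  norm_nonneg _

lemma euclNorm_sq {d : ℕ} (v : Fin d → ℝ) : euclNorm v ^ 2 = v ⬝ᵥ v := by
  rw [euclNorm, EuclideanSpace.norm_sq_eq]
  simp [dotProduct, sq]

lemma euclNorm_mulVec_sq {k d : ℕ} (S : Matrix (Fin k) (Fin d) ℝ) (v : Fin d → ℝ) :
    euclNorm (S *ᵥ v) ^ 2 = v ⬝ᵥ (Sᵀ * S) *ᵥ v := by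
  rw [euclNorm_sq, ← mulVec_mulVec, dotProduct_mulVec v, vecMul_transpose]

lemma euclNorm_mulVec_le {k d : ℕ} (S : Matrix (Fin k) (Fin d) ℝ) (v : Fin d → ℝ) :
    euclNorm (S *ᵥ v) ≤ ‖S‖ * euclNorm v :=
  S.l2_opNorm_mulVec _

lemma euclNorm_mulVec_mulVec_le_of_posSemidef_sub {k d : ℕ} {S : Matrix (Fin k) (Fin d) ℝ}
    {P A : Matrix (Fin d) (Fin d) ℝ} (hSP : Sᵀ * S = P) (hA : (P - Aᵀ * P * A).PosSemidef)
    (v : Fin d → ℝ) : euclNorm (S *ᵥ (A *ᵥ v)) ≤ euclNorm (S *ᵥ v) := by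
  have hquad : (A *ᵥ v) ⬝ᵥ P *ᵥ (A *ᵥ v) ≤ v ⬝ᵥ P *ᵥ v := by
    have := hA.dotProduct_mulVec_nonneg v
    rwa [star_trivial, sub_mulVec, dotProduct_sub, sub_nonneg, ← mulVec_mulVec, ← mulVec_mulVec,
      dotProduct_mulVec v, vecMul_transpose] at this
  rwa [← pow_le_pow_iff_left₀ (euclNorm_nonneg _) (euclNorm_nonneg _) two_ne_zero,
    euclNorm_mulVec_sq, euclNorm_mulVec_sq, hSP]

lemma norm_sum_smul_le_of_forall_norm_le {ι F : Type*} [SeminormedAddCommGroup F]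
    [NormedSpace ℝ F] {t : Finset ι} {w : ι → ℝ} {z : ι → F} {c : ℝ}
    (hw₀ : ∀ i ∈ t, 0 ≤ w i) (hw₁ : ∑ i ∈ t, w i = 1) (hz : ∀ i ∈ t, ‖z i‖ ≤ c) :
    ‖∑ i ∈ t, w i • z i‖ ≤ c := by
  simpa only [mem_closedBall_zero_iff] using
    (convex_closedBall (0 : F) c).sum_mem hw₀ hw₁ (by simpa only [mem_closedBall_zero_iff] using hz)

lemma euclNorm_mulVec_sum_smul_mulVec_le {ι : Type*} [Fintype ι] {k d : ℕ}
    (S : Matrix (Fin k) (Fin d) ℝ) {A : ι → Matrix (Fin d) (Fin d) ℝ} {h : ι → ℝ}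
    (h₀ : ∀ i, 0 ≤ h i) (h₁ : ∑ i, h i = 1) {v : Fin d → ℝ} {c : ℝ}
    (hA : ∀ i, euclNorm (S *ᵥ (A i *ᵥ v)) ≤ c) :
    euclNorm (S *ᵥ ((∑ i, h i • A i) *ᵥ v)) ≤ c := by
  have : S *ᵥ ((∑ i, h i • A i) *ᵥ v) = ∑ i, h i • (S *ᵥ (A i *ᵥ v)) := by
    simp [Matrix.sum_mulVec, Matrix.mulVec_sum, Matrix.smul_mulVec, Matrix.mulVec_smul]
  rw [euclNorm, this, map_sum]
  simp only [map_smul]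
  exact norm_sum_smul_le_of_forall_norm_le (fun i _ => h₀ i) h₁ (fun i _ => hA i)

lemma exists_euclNorm_le_of_euclNorm_mulVec_le {d : ℕ} {S : Matrix (Fin d) (Fin d) ℝ}
    (hS : IsUnit S) :
    ∃ C > 0, ∀ v w, euclNorm (S *ᵥ v) ≤ euclNorm (S *ᵥ w) → euclNorm v ≤ C * euclNorm w := by
  refine ⟨‖S⁻¹‖ * ‖S‖ + 1, by positivity, fun v w hvw => ?_⟩
  calc euclNorm v = euclNorm (S⁻¹ *ᵥ (S *ᵥ v)) := by
        rw [mulVec_mulVec, nonsing_inv_mul _ ((isUnit_iff_isUnit_det S).mp hS), one_mulVec]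
    _ ≤ ‖S⁻¹‖ * euclNorm (S *ᵥ v) := euclNorm_mulVec_le _ _
    _ ≤ ‖S⁻¹‖ * (‖S‖ * euclNorm w) := by gcongr; exact hvw.trans (euclNorm_mulVec_le _ _)
    _ ≤ (‖S⁻¹‖ * ‖S‖ + 1) * euclNorm w := by
      rw [← mul_assoc]
      exact mul_le_mul_of_nonneg_right (le_add_of_nonneg_right zero_le_one) (euclNorm_nonneg w)

lemma Matrix.PosDef.exists_isUnit_transpose_mul_self_eq {n : Type*} [Fintype n] [DecidableEq n]
    {P : Matrix n n ℝ} (hP : P.PosDef) : ∃ S : Matrix n n ℝ, IsUnit S ∧ Sᵀ * S = P := by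
  open scoped MatrixOrder in
  obtain ⟨S, hS⟩ := CStarAlgebra.nonneg_iff_eq_star_mul_self.mp hP.posSemidef.nonneg
  have hSP : Sᵀ * S = P := by rw [hS, star_eq_conjTranspose, conjTranspose_eq_transpose_of_trivial]
  exact ⟨S, isUnit_of_mul_isUnit_right (hSP ▸ hP.isUnit), hSP⟩

/-- If the vertex LMIs `A iᵀ * P * A i ⪯ P` hold for a symmetric positive definite `P`,
then there is a constant `C > 0` such that every trajectory of the discrete-time
polytopic LPV system satisfies `‖x k‖ ≤ C * ‖x 0‖` for all `k`. -/
theorem polytopic_lpv_uniform_bound {m n : ℕ}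
    (A : Fin n → Matrix (Fin m) (Fin m) ℝ)
    (P : Matrix (Fin m) (Fin m) ℝ) (hP : P.PosDef)
    (hLMI : ∀ i, (P - (A i)ᵀ * P * A i).PosSemidef) :
    ∃ C > 0, ∀ x : ℕ → Fin m → ℝ,
      (∀ k, ∃ h : Fin n → ℝ, (∀ i, 0 ≤ h i) ∧ (∑ i, h i = 1) ∧
        x (k + 1) = (∑ i, h i • A i) *ᵥ x k) →
      ∀ k, euclNorm (x k) ≤ C * euclNorm (x 0) := by
  obtain ⟨S, hS, hSP⟩ := hP.exists_isUnit_transpose_mul_self_eq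
  obtain ⟨C, hC, hCS⟩ := exists_euclNorm_le_of_euclNorm_mulVec_le hS
  refine ⟨C, hC, fun x hx k => hCS _ _ ?_⟩
  refine antitone_nat_of_succ_le (f := fun k => euclNorm (S *ᵥ x k)) (fun k => ?_) (Nat.zero_le k)
  obtain ⟨h, h₀, h₁, hstep⟩ := hx k
  rw [hstep]
  exact euclNorm_mulVec_sum_smul_mulVec_le S h₀ h₁ fun i =>
    euclNorm_mulVec_mulVec_le_of_posSemidef_sub hSP (hLMI i) (x k)
end

section
/- (Maximum error LMI constraints for VIC.) Let A_1, …, A_n be real m×m matrices, s ∈ ℝ^m a vector (the selection row), Δ ≥ 0, and P a real symmetric positive definite m×m matrix such that for every i = 1, …, n: (i) A_iᵀ P A_i ⪯ P, and (ii) the block matrix [[P, A_iᵀ s], [sᵀ A_i, Δ²]] is positive semidefinite. Then every trajectory x of the discrete-time polytopic LPV system (with weights h_i(k)) satisfying x(0)ᵀ P x(0) ≤ 1 obeys the error bound |sᵀ (Σ_i h_i(k) A_i) x(k)| ≤ Δ for all k ∈ ℕ. -/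
/-!
The ellipsoid `{v | vᵀ P v ≤ 1}` is convex and, by the vertex LMIs, mapped into itself by
every vertex matrix `A i`; hence it is mapped into itself by every convex combination
`∑ i, h i • A i`, and the whole trajectory stays in it. On the ellipsoid, the block LMI bounds
`|sᵀ A i v|` by `Δ` (a discriminant argument), and the slab `{w | |sᵀ w| ≤ Δ}` is convex, so
the same bound holds for every convex combination of the vertices.
-/

open Matrix BigOperators

section
variable {ι : Type*} [Fintype ι]

/-- With `q v = vᵀ P v` and `a + b = 1`: `a q u + b q v - q (a u + b v) = a b q (u - v)`. -/
theorem Matrix.PosSemidef.convexOn_dotProduct_mulVec {P : Matrix ι ι ℝ} (hP : P.PosSemidef) :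
    ConvexOn ℝ Set.univ fun v : ι → ℝ => v ⬝ᵥ (P *ᵥ v) := by
  refine ⟨convex_univ, fun u _ v _ a b ha hb hab => ?_⟩
  have hdiff := hP.dotProduct_mulVec_nonneg (u - v)
  simp only [star_trivial, mulVec_sub, dotProduct_sub, sub_dotProduct] at hdiff
  simp only [smul_eq_mul, mulVec_add, mulVec_smul, add_dotProduct, dotProduct_add,
    smul_dotProduct, dotProduct_smul]
  obtain rfl : b = 1 - a := by linarith
  nlinarith [mul_nonneg (mul_nonneg ha hb) hdiff]

theorem Matrix.PosSemidef.convex_setOf_dotProduct_mulVec_le {P : Matrix ι ι ℝ}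
    (hP : P.PosSemidef) (r : ℝ) : Convex ℝ {v : ι → ℝ | v ⬝ᵥ (P *ᵥ v) ≤ r} := by
  simpa using hP.convexOn_dotProduct_mulVec.convex_le r

theorem dotProduct_mulVec_mulVec_le_of_posSemidef_sub {P A : Matrix ι ι ℝ}
    (hA : (P - Aᵀ * P * A).PosSemidef) (v : ι → ℝ) :
    (A *ᵥ v) ⬝ᵥ (P *ᵥ (A *ᵥ v)) ≤ v ⬝ᵥ (P *ᵥ v) := by
  have h := hA.dotProduct_mulVec_nonneg v
  rwa [star_trivial, sub_mulVec, dotProduct_sub, sub_nonneg, Matrix.mul_assoc, ← mulVec_mulVec,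
    dotProduct_mulVec v, vecMul_transpose, ← mulVec_mulVec] at h

/-- The block form evaluated at `(v, t)` is the quadratic `d t² + 2 (u ⬝ v) t + vᵀ P v` in `t`;
it is nonnegative, so its discriminant is nonpositive. -/
theorem sq_dotProduct_le_of_fromBlocks_posSemidef {P : Matrix ι ι ℝ} {u : ι → ℝ} {d : ℝ}
    (hM : (fromBlocks P (replicateCol (Fin 1) u) (replicateRow (Fin 1) u) !![d]).PosSemidef)
    (v : ι → ℝ) : (u ⬝ᵥ v) ^ 2 ≤ d * (v ⬝ᵥ (P *ᵥ v)) := by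
  have hquad (t : ℝ) : 0 ≤ d * (t * t) + 2 * (u ⬝ᵥ v) * t + v ⬝ᵥ (P *ᵥ v) := by
    have h := hM.dotProduct_mulVec_nonneg (Sum.elim v fun _ => t)
    rw [star_trivial, fromBlocks_mulVec, sumElim_dotProduct_sumElim, dotProduct_add,
      dotProduct_add, Sum.elim_comp_inl, Sum.elim_comp_inr,
      dotProduct_mulVec v (replicateCol _ u), mulVec_replicateCol_eq_const,
      replicateRow_mulVec_eq_const, dotProduct_comm v u] at h
    simp only [dotProduct, mulVec, Fin.sum_univ_one, Function.const_apply, of_apply,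
      cons_val_fin_one] at h ⊢
    linarith
  have hdiscrim := discrim_le_zero hquad
  rw [discrim] at hdiscrim
  linarith

end

section
variable {κ m n : Type*} [Fintype κ] [Fintype n]

theorem sum_smul_mulVec_mem_of_convex {S : Set (m → ℝ)} (hS : Convex ℝ S) {w : κ → ℝ}
    (hw₀ : ∀ i, 0 ≤ w i) (hw₁ : ∑ i, w i = 1) {A : κ → Matrix m n ℝ} {v : n → ℝ}
    (hv : ∀ i, A i *ᵥ v ∈ S) : (∑ i, w i • A i) *ᵥ v ∈ S := by
  simp only [sum_mulVec, smul_mulVec]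
  exact hS.sum_mem (fun i _ => hw₀ i) hw₁ fun i _ => hv i

theorem polytopic_trajectory_mem_of_convex {S : Set (n → ℝ)} (hS : Convex ℝ S)
    {A : κ → Matrix n n ℝ} (hA : ∀ i, ∀ v ∈ S, A i *ᵥ v ∈ S) {x : ℕ → n → ℝ}
    {h : ℕ → κ → ℝ} (hh : ∀ k i, 0 ≤ h k i) (hsum : ∀ k, ∑ i, h k i = 1)
    (hdyn : ∀ k, x (k + 1) = (∑ i, h k i • A i) *ᵥ x k) (hx0 : x 0 ∈ S) :
    ∀ k, x k ∈ S := by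
  intro k
  induction k with
  | zero => exact hx0
  | succ k ih =>
    rw [hdyn k]
    exact sum_smul_mulVec_mem_of_convex hS (hh k) (hsum k) fun i => hA i _ ih

end

theorem convex_setOf_abs_dotProduct_le {n : Type*} [Fintype n] (s : n → ℝ) (Δ : ℝ) :
    Convex ℝ {w : n → ℝ | |s ⬝ᵥ w| ≤ Δ} := by
  simpa [Set.preimage, abs_le] using (convex_Icc (-Δ) Δ).is_linear_preimage
    (f := (s ⬝ᵥ ·)) ⟨dotProduct_add s, fun c w => dotProduct_smul c s w⟩

/-- Maximum error LMI constraints for VIC: if the vertex LMIs `A iᵀ * P * A i ⪯ P`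
and the block LMIs `[[P, A iᵀ s], [sᵀ A i, Δ²]] ⪰ 0` hold for a symmetric positive
definite `P`, then every trajectory of the polytopic LPV system starting in the
ellipsoid `{x : xᵀ P x ≤ 1}` obeys the error bound `|sᵀ (∑ i, h k i • A i) x k| ≤ Δ`
for all `k`. -/
theorem polytopic_lpv_error_bound {m n : ℕ}
    (A : Fin n → Matrix (Fin m) (Fin m) ℝ)
    (s : Fin m → ℝ) (Δ : ℝ) (hΔ : 0 ≤ Δ)
    (P : Matrix (Fin m) (Fin m) ℝ) (hP : P.PosDef)
    (hLMI : ∀ i, (P - (A i)ᵀ * P * A i).PosSemidef)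
    (hblock : ∀ i, (fromBlocks P (Matrix.replicateCol (Fin 1) ((A i)ᵀ *ᵥ s))
      (Matrix.replicateRow (Fin 1) (s ᵥ* A i)) !![Δ ^ 2]).PosSemidef)
    (x : ℕ → Fin m → ℝ) (h : ℕ → Fin n → ℝ)
    (hh : ∀ k i, 0 ≤ h k i) (hsum : ∀ k, ∑ i, h k i = 1)
    (hdyn : ∀ k, x (k + 1) = (∑ i, h k i • A i) *ᵥ x k)
    (hx0 : x 0 ⬝ᵥ (P *ᵥ x 0) ≤ 1) :
    ∀ k, |s ⬝ᵥ ((∑ i, h k i • A i) *ᵥ x k)| ≤ Δ := by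
  have hx : ∀ k, x k ⬝ᵥ (P *ᵥ x k) ≤ 1 :=
    polytopic_trajectory_mem_of_convex (hP.posSemidef.convex_setOf_dotProduct_mulVec_le 1)
      (fun i v hv => (dotProduct_mulVec_mulVec_le_of_posSemidef_sub (hLMI i) v).trans hv)
      hh hsum hdyn hx0
  have hvertex (k : ℕ) (i : Fin n) : |s ⬝ᵥ (A i *ᵥ x k)| ≤ Δ := by
    have hsq := sq_dotProduct_le_of_fromBlocks_posSemidef
      (mulVec_transpose (A i) s ▸ hblock i) (x k)
    rw [← dotProduct_mulVec] at hsq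
    exact abs_le_of_sq_le_sq (hsq.trans (mul_le_of_le_one_right (sq_nonneg Δ) (hx k))) hΔ
  exact fun k => sum_smul_mulVec_mem_of_convex (convex_setOf_abs_dotProduct_le s Δ)
    (hh k) (hsum k) (hvertex k)
end

section
/- Let A be a real m×m matrix and P a real symmetric positive definite m×m matrix such that P − Aᵀ P A is positive definite. Then every complex eigenvalue z of A (i.e., every root z ∈ ℂ of the characteristic polynomial of A) satisfies |z| < 1. -/
/-!
If `A v = z v` with `v ≠ 0`, the quadratic form of `Aᴴ P A` at `v` is `|z|²` times that of `P`,
so positivity of `P` and of `P - Aᴴ P A` at `v` forces `|z|² < 1`. For a real matrix `A` the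
eigenvector is complex, so one first checks that the real positive definite matrices `P` and
`P - Aᵀ P A` stay positive definite over `ℂ`: writing such a matrix as `Bᵀ B` shows that its
complexification is positive semidefinite, and it is still invertible.
-/

open Matrix Polynomial
open scoped ComplexOrder

namespace Matrix

variable {n 𝕜 : Type*} [Fintype n] [RCLike 𝕜]

omit [Fintype n] in
theorem conjTranspose_map_algebraMap (B : Matrix n n ℝ) :
    (B.map (algebraMap ℝ 𝕜))ᴴ = Bᵀ.map (algebraMap ℝ 𝕜) := by
  ext i j
  simp

open scoped MatrixOrder in
theorem PosDef.map_algebraMap [DecidableEq n] {Q : Matrix n n ℝ} (hQ : Q.PosDef) :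
    (Q.map (algebraMap ℝ 𝕜)).PosDef := by
  obtain ⟨B, rfl⟩ := CStarAlgebra.nonneg_iff_eq_star_mul_self.mp hQ.posSemidef.nonneg
  have hmap : (star B * B).map (algebraMap ℝ 𝕜) =
      (B.map (algebraMap ℝ 𝕜))ᴴ * B.map (algebraMap ℝ 𝕜) := by
    rw [conjTranspose_map_algebraMap, Matrix.map_mul, star_eq_conjTranspose,
      conjTranspose_eq_transpose_of_trivial]
  rw [hmap, (posSemidef_conjTranspose_mul_self _).posDef_iff_isUnit, ← hmap]
  exact hQ.isUnit.map (algebraMap ℝ 𝕜).mapMatrix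

theorem star_dotProduct_conjTranspose_mul_mul_mulVec_of_mulVec_eq_smul {B P : Matrix n n 𝕜}
    {z : 𝕜} {v : n → 𝕜} (hv : B *ᵥ v = z • v) :
    star v ⬝ᵥ (Bᴴ * P * B) *ᵥ v = (‖z‖ ^ 2 : 𝕜) * (star v ⬝ᵥ P *ᵥ v) := by
  rw [← mulVec_mulVec, ← mulVec_mulVec, hv, dotProduct_mulVec, ← star_mulVec, hv, star_smul,
    mulVec_smul, smul_dotProduct, dotProduct_smul, smul_smul, smul_eq_mul, RCLike.star_def,
    RCLike.conj_mul]

theorem norm_lt_one_of_mem_spectrum_of_posDef_sub_conjTranspose_mul_mul [DecidableEq n]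
    {B P : Matrix n n 𝕜} (hP : P.PosDef) (hBP : (P - Bᴴ * P * B).PosDef) {z : 𝕜}
    (hz : z ∈ spectrum 𝕜 B) : ‖z‖ < 1 := by
  rw [← spectrum_toLin', ← Module.End.hasEigenvalue_iff_mem_spectrum] at hz
  obtain ⟨v, hv⟩ := hz.exists_hasEigenvector
  have hBv : B *ᵥ v = z • v := by simpa using hv.apply_eq_smul
  have hPv : 0 < RCLike.re (star v ⬝ᵥ P *ᵥ v) :=
    (RCLike.pos_iff.mp (hP.dotProduct_mulVec_pos hv.2)).1
  have hBPv : 0 < (1 - ‖z‖ ^ 2) * RCLike.re (star v ⬝ᵥ P *ᵥ v) := by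
    have h := hBP.dotProduct_mulVec_pos hv.2
    rw [sub_mulVec, dotProduct_sub,
      star_dotProduct_conjTranspose_mul_mul_mulVec_of_mulVec_eq_smul hBv, ← one_sub_mul,
      ← RCLike.ofReal_pow, ← RCLike.ofReal_one, ← RCLike.ofReal_sub] at h
    simpa only [RCLike.re_ofReal_mul] using (RCLike.pos_iff.mp h).1
  have : 0 < 1 - ‖z‖ ^ 2 := (pos_iff_pos_of_mul_pos hBPv).2 hPv
  exact (sq_lt_one_iff₀ (norm_nonneg z)).mp (by linarith)

end Matrix

/-- Strict discrete-time Lyapunov eigenvalue bound: if `P` is symmetric positive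
definite and `P − Aᵀ P A` is positive definite, then every complex root of the
characteristic polynomial of `A` lies in the open unit disk. -/
theorem eigenvalues_lt_one_of_strict_lyapunov {m : ℕ}
    (A P : Matrix (Fin m) (Fin m) ℝ) (hP : P.PosDef)
    (hLMI : (P - Aᵀ * P * A).PosDef) :
    ∀ z : ℂ, ((A.charpoly).map (algebraMap ℝ ℂ)).IsRoot z → ‖z‖ < 1 := by
  intro z hz
  have hspec : z ∈ spectrum ℂ (A.map (algebraMap ℝ ℂ)) := by
    rwa [mem_spectrum_iff_isRoot_charpoly, charpoly_map]
  refine norm_lt_one_of_mem_spectrum_of_posDef_sub_conjTranspose_mul_mul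
    hP.map_algebraMap ?_ hspec
  rw [conjTranspose_map_algebraMap, ← Matrix.map_mul, ← Matrix.map_mul,
    ← Matrix.map_sub _ (map_sub _)]
  exact hLMI.map_algebraMap
end

section
/- (D-stability via LMI regions, sufficiency direction.) Let α, β be real q×q matrices with α symmetric, and let A be a real m×m matrix. Suppose there exists a real symmetric positive definite m×m matrix P such that the qm×qm real matrix α ⊗ P + β ⊗ (P·A) + βᵀ ⊗ (Aᵀ·P) is negative definite, where ⊗ denotes the Kronecker product. Then for every complex eigenvalue z of A (every root z ∈ ℂ of the characteristic polynomial of A), the complex q×q Hermitian matrix f(z) = α_ℂ + z·β_ℂ + z̄·(βᵀ)_ℂ is negative definite. -/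
open Matrix Polynomial Kronecker ComplexOrder

/-!
An eigenvector `v` of `A` for the eigenvalue `z` turns the LMI into a statement about `f(z)`:
on the vector `x ⊗ v` the quadratic form of `α ⊗ P + β ⊗ PA + βᵀ ⊗ AᵀP` equals
`(x* f(z) x) (v* P v)`, and `v* P v > 0`. Definiteness passes from real to complex matrices
because a real symmetric form evaluated at `a + i b` is the sum of its values at `a`
and `b`.
-/

namespace Matrix

variable {l n R : Type*}

theorem conjTranspose_map_ofReal (M : Matrix l n ℝ) :
    (M.map Complex.ofReal)ᴴ = Mᵀ.map Complex.ofReal := by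
  ext i j
  simp

theorem IsHermitian.add_smul_add_star_smul_conjTranspose [CommSemiring R] [StarRing R]
    {α : Matrix n n R} (hα : α.IsHermitian) (β : Matrix n n R) (z : R) :
    (α + z • β + star z • βᴴ).IsHermitian := by
  simp only [IsHermitian, conjTranspose_add, conjTranspose_smul, conjTranspose_conjTranspose,
    star_star, hα.eq]
  abel

def kroneckerVec [Mul R] (x : l → R) (v : n → R) : l × n → R := fun p => x p.1 * v p.2

theorem kroneckerVec_ne_zero [MulZeroClass R] [NoZeroDivisors R] {x : l → R} {v : n → R}
    (hx : x ≠ 0) (hv : v ≠ 0) : kroneckerVec x v ≠ 0 := by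
  obtain ⟨i, hi⟩ := Function.ne_iff.mp hx
  obtain ⟨j, hj⟩ := Function.ne_iff.mp hv
  exact Function.ne_iff.mpr ⟨(i, j), mul_ne_zero hi hj⟩

theorem star_kroneckerVec [CommSemiring R] [StarRing R] (x : l → R) (v : n → R) :
    star (kroneckerVec x v) = kroneckerVec (star x) (star v) :=
  funext fun _ => star_mul' _ _

variable [Fintype l] [Fintype n]

theorem kroneckerVec_dotProduct_kroneckerVec [CommSemiring R] (x y : l → R) (v w : n → R) :
    kroneckerVec x v ⬝ᵥ kroneckerVec y w = (x ⬝ᵥ y) * (v ⬝ᵥ w) := by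
  simp only [kroneckerVec, dotProduct, Fintype.sum_prod_type, Finset.sum_mul_sum]
  exact Finset.sum_congr rfl fun i _ => Finset.sum_congr rfl fun j _ => by ring

theorem kronecker_mulVec_kroneckerVec [CommSemiring R] (M : Matrix l l R) (N : Matrix n n R)
    (x : l → R) (v : n → R) :
    (M ⊗ₖ N) *ᵥ kroneckerVec x v = kroneckerVec (M *ᵥ x) (N *ᵥ v) := by
  ext ⟨i, j⟩
  simp only [kroneckerVec, mulVec, dotProduct, kroneckerMap_apply, Fintype.sum_prod_type,
    Finset.sum_mul_sum]
  exact Finset.sum_congr rfl fun k _ => Finset.sum_congr rfl fun l _ => by ring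

theorem star_kroneckerVec_dotProduct_kronecker_mulVec [CommSemiring R] [StarRing R]
    (M : Matrix l l R) (N : Matrix n n R) (x : l → R) (v : n → R) :
    star (kroneckerVec x v) ⬝ᵥ ((M ⊗ₖ N) *ᵥ kroneckerVec x v) =
      (star x ⬝ᵥ (M *ᵥ x)) * (star v ⬝ᵥ (N *ᵥ v)) := by
  rw [kronecker_mulVec_kroneckerVec, star_kroneckerVec, kroneckerVec_dotProduct_kroneckerVec]

theorem star_kroneckerVec_dotProduct_lmi_mulVec [CommSemiring R] [StarRing R]
    (α β γ : Matrix l l R) {P A : Matrix n n R} {z : R} {v : n → R} (hv : A *ᵥ v = z • v)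
    (x : l → R) :
    star (kroneckerVec x v) ⬝ᵥ
        ((α ⊗ₖ P + β ⊗ₖ (P * A) + γ ⊗ₖ (Aᴴ * P)) *ᵥ kroneckerVec x v) =
      (star x ⬝ᵥ ((α + z • β + star z • γ) *ᵥ x)) * (star v ⬝ᵥ (P *ᵥ v)) := by
  have hPA : star v ⬝ᵥ ((P * A) *ᵥ v) = z * (star v ⬝ᵥ (P *ᵥ v)) := by
    rw [← mulVec_mulVec, hv, mulVec_smul, dotProduct_smul, smul_eq_mul]
  have hAP : star v ⬝ᵥ ((Aᴴ * P) *ᵥ v) = star z * (star v ⬝ᵥ (P *ᵥ v)) := by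
    rw [← mulVec_mulVec, dotProduct_mulVec, ← star_mulVec, hv, star_smul, smul_dotProduct,
      smul_eq_mul]
  simp only [add_mulVec, dotProduct_add, star_kroneckerVec_dotProduct_kronecker_mulVec, hPA, hAP,
    smul_mulVec, dotProduct_smul, smul_eq_mul]
  ring

theorem exists_mulVec_eq_smul_of_isRoot_charpoly {K : Type*} [Field K] [DecidableEq n]
    {A : Matrix n n K} {μ : K} (h : A.charpoly.IsRoot μ) : ∃ v ≠ 0, A *ᵥ v = μ • v := by
  rw [← charpoly_toLin', ← Module.End.hasEigenvalue_iff_isRoot_charpoly] at h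
  obtain ⟨v, hv⟩ := h.exists_hasEigenvector
  exact ⟨v, hv.2, Module.End.mem_eigenspace_iff.mp hv.1⟩

theorem IsSymm.star_dotProduct_map_ofReal_mulVec {M : Matrix n n ℝ} (hM : M.IsSymm)
    (x : n → ℂ) :
    star x ⬝ᵥ (M.map Complex.ofReal *ᵥ x) =
      ↑((Complex.re ∘ x) ⬝ᵥ (M *ᵥ (Complex.re ∘ x)) +
        (Complex.im ∘ x) ⬝ᵥ (M *ᵥ (Complex.im ∘ x))) := by
  set a := Complex.re ∘ x
  set b := Complex.im ∘ x
  set ι := Complex.ofRealHom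
  have hx : x = ι ∘ a + Complex.I • ι ∘ b := by
    funext i; simpa [a, b, ι, mul_comm] using (Complex.re_add_im (x i)).symm
  have hstar : star (ι ∘ a + Complex.I • ι ∘ b) = ι ∘ a - Complex.I • ι ∘ b := by
    funext i; simp [ι, sub_eq_add_neg]
  have hform (u w : n → ℝ) : ι ∘ u ⬝ᵥ (M.map ι *ᵥ ι ∘ w) = ι (u ⬝ᵥ (M *ᵥ w)) := by
    rw [show M.map ι *ᵥ ι ∘ w = ι ∘ (M *ᵥ w) from
      funext fun i => (RingHom.map_mulVec ι M w i).symm, RingHom.map_dotProduct]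
  have hsymm : b ⬝ᵥ (M *ᵥ a) = a ⬝ᵥ (M *ᵥ b) := by
    rw [dotProduct_mulVec, ← mulVec_transpose, hM.eq, dotProduct_comm]
  rw [hx, hstar, show Complex.ofReal = ι from rfl]
  simp only [mulVec_add, mulVec_smul, dotProduct_add, sub_dotProduct, dotProduct_smul,
    smul_dotProduct, hform, hsymm, map_add, smul_eq_mul]
  linear_combination (-ι (b ⬝ᵥ M *ᵥ b)) * Complex.I_sq

theorem PosDef.map_ofReal {M : Matrix n n ℝ} (hM : M.PosDef) :
    (M.map Complex.ofReal).PosDef := by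
  have hsymm : M.IsSymm := by
    rw [IsSymm, ← conjTranspose_eq_transpose_of_trivial]
    exact hM.isHermitian
  refine posDef_iff_dotProduct_mulVec.2 ⟨?_, fun x hx => ?_⟩
  · rw [IsHermitian, conjTranspose_map_ofReal, hsymm.eq]
  have hpos {u : n → ℝ} (hu : u ≠ 0) : 0 < u ⬝ᵥ (M *ᵥ u) := by
    simpa using hM.dotProduct_mulVec_pos hu
  have hnonneg (u : n → ℝ) : 0 ≤ u ⬝ᵥ (M *ᵥ u) := by
    simpa using hM.posSemidef.dotProduct_mulVec_nonneg u
  rw [hsymm.star_dotProduct_map_ofReal_mulVec, Complex.zero_lt_real]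
  by_cases hre : Complex.re ∘ x = 0
  · have him : Complex.im ∘ x ≠ 0 := fun him =>
      hx (funext fun i => Complex.ext (congrFun hre i) (congrFun him i))
    exact add_pos_of_nonneg_of_pos (hnonneg _) (hpos him)
  · exact add_pos_of_pos_of_nonneg (hpos hre) (hnonneg _)

end Matrix

/-- D-stability via LMI regions (sufficiency): if there is a symmetric positive
definite `P` such that `α ⊗ P + β ⊗ (P·A) + βᵀ ⊗ (Aᵀ·P)` is negative definite,
then for every complex eigenvalue `z` of `A` the Hermitian matrix
`f(z) = α + z·β + z̄·βᵀ` is negative definite. -/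
theorem dstability_of_kronecker_lmi {q m : ℕ}
    (α β : Matrix (Fin q) (Fin q) ℝ) (hα : αᵀ = α)
    (A : Matrix (Fin m) (Fin m) ℝ)
    (P : Matrix (Fin m) (Fin m) ℝ) (hP : P.PosDef)
    (hLMI : (-(α ⊗ₖ P + β ⊗ₖ (P * A) + βᵀ ⊗ₖ (Aᵀ * P))).PosDef) :
    ∀ z : ℂ, ((A.charpoly).map (algebraMap ℝ ℂ)).IsRoot z →
      (-(α.map Complex.ofReal + z • β.map Complex.ofReal +
        (starRingEnd ℂ z) • (βᵀ.map Complex.ofReal))).PosDef := by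
  intro z hz
  rw [← charpoly_map, Complex.coe_algebraMap] at hz
  obtain ⟨v, hv0, hAv⟩ := exists_mulVec_eq_smul_of_isRoot_charpoly hz
  have hmap : (α ⊗ₖ P + β ⊗ₖ (P * A) + βᵀ ⊗ₖ (Aᵀ * P)).map Complex.ofReal =
      α.map Complex.ofReal ⊗ₖ P.map Complex.ofReal +
        β.map Complex.ofReal ⊗ₖ (P.map Complex.ofReal * A.map Complex.ofReal) +
        (β.map Complex.ofReal)ᴴ ⊗ₖ ((A.map Complex.ofReal)ᴴ * P.map Complex.ofReal) := by
    ext ⟨i, j⟩ ⟨k, l⟩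
    simp [mul_apply]
  have hαc : (α.map Complex.ofReal).IsHermitian := by
    rw [IsHermitian, conjTranspose_map_ofReal, hα]
  rw [← conjTranspose_map_ofReal]
  refine posDef_iff_dotProduct_mulVec.2
    ⟨(hαc.add_smul_add_star_smul_conjTranspose _ z).neg, fun x hx => ?_⟩
  have hquad := hLMI.map_ofReal.dotProduct_mulVec_pos (kroneckerVec_ne_zero hx hv0)
  rw [Matrix.map_neg _ Complex.ofReal_neg, hmap, neg_mulVec, dotProduct_neg,
    star_kroneckerVec_dotProduct_lmi_mulVec _ _ _ hAv, ← neg_mul, ← dotProduct_neg,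
    ← neg_mulVec] at hquad
  exact (pos_iff_pos_of_mul_pos hquad).mpr (hP.map_ofReal.dotProduct_mulVec_pos hv0)
end

section
/- Let γ ∈ (0, π/2). Define the real 2×2 matrices α_v = −2·sin(γ)·I₂ and β_v = [[sin(γ), cos(γ)], [−cos(γ), sin(γ)]]. Then for every z ∈ ℂ, the complex 2×2 Hermitian matrix f(z) = α_v + z·β_v + z̄·β_vᵀ (with real matrices regarded as complex entrywise) is negative definite if and only if Re z < 1 and cos(γ)·|Im z| < sin(γ)·(1 − Re z), i.e., if and only if z lies strictly inside the conic sector with apex at 1 opening towards the left with half-angle γ. -/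
/-!
Writing `z = x + iy`, the Hermitian matrix `-f(z)` has constant diagonal `2 sin γ (1 - x)` and
purely imaginary off-diagonal entry `-2i cos γ · y`. A Hermitian `2 × 2` matrix with constant real
diagonal `a` is positive definite iff its off-diagonal entry has modulus `< a` (complete the
square), and for `0 < γ < π/2` that inequality is exactly the cone condition.
-/

open Matrix ComplexOrder Real

namespace Matrix

theorem posDef_fin_two_iff {a d : ℝ} {b : ℂ} :
    (!![(a : ℂ), b; star b, (d : ℂ)]).PosDef ↔ 0 < a ∧ ‖b‖ ^ 2 < a * d := by
  set M := !![(a : ℂ), b; star b, (d : ℂ)]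
  have complete_square (v : Fin 2 → ℂ) : a * (star v ⬝ᵥ (M *ᵥ v)) =
      star (a * v 0 + b * v 1) * (a * v 0 + b * v 1) +
        ((a * d - ‖b‖ ^ 2 : ℝ) : ℂ) * (star (v 1) * v 1) := by
    simp only [M, dotProduct, mulVec, Fin.sum_univ_two, of_apply, cons_val', cons_val_fin_one,
      cons_val_zero, cons_val_one, Pi.star_apply, RCLike.star_def, star_add, star_mul',
      Complex.conj_ofReal, Complex.ofReal_sub, Complex.ofReal_mul, Complex.ofReal_pow]
    rw [← Complex.conj_mul']
    ring
  constructor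
  · intro hM
    have ha : 0 < a := Complex.zero_lt_real.mp (hM.diag_pos (i := 0))
    -- `![-b, a]` kills the square, leaving `a² (a d - ‖b‖²)`
    have hpos := hM.dotProduct_mulVec_pos (x := ![-b, a]) (by simp [ha.ne'])
    have hQ : (0 : ℂ) < ((a * d - ‖b‖ ^ 2) * (a * a) : ℝ) := by
      convert mul_pos (Complex.zero_lt_real.mpr ha) hpos using 1
      rw [complete_square]
      simp only [cons_val_zero, cons_val_one, Complex.ofReal_mul, Complex.ofReal_sub,
        Complex.ofReal_pow, Complex.star_def, Complex.conj_ofReal]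
      ring
    rw [Complex.zero_lt_real] at hQ
    exact ⟨ha, by nlinarith [pos_of_mul_pos_left hQ (by positivity)]⟩
  · rintro ⟨ha, hdet⟩
    refine .of_dotProduct_mulVec_pos ?_ fun v hv => ?_
    · ext i j
      fin_cases i <;> fin_cases j <;> simp [M]
    refine (pos_iff_pos_of_mul_pos ?_).mp (Complex.zero_lt_real.mpr ha)
    rw [complete_square]
    by_cases hv1 : v 1 = 0
    · have hv0 : v 0 ≠ 0 := fun hv0 => hv (by ext i; fin_cases i <;> simp [hv0, hv1])
      refine add_pos_of_pos_of_nonneg (star_mul_self_pos (.of_ne_zero ?_)) (by simp [hv1])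
      simp [hv1, hv0, ha.ne']
    · have hc : (0 : ℂ) < ((a * d - ‖b‖ ^ 2 : ℝ) : ℂ) := Complex.zero_lt_real.mpr (by linarith)
      exact add_pos_of_nonneg_of_pos (star_mul_self_nonneg _)
        (mul_pos hc (star_mul_self_pos (.of_ne_zero hv1)))

theorem posDef_fin_two_iff_norm_lt {a : ℝ} {b : ℂ} :
    (!![(a : ℂ), b; star b, (a : ℂ)]).PosDef ↔ ‖b‖ < a := by
  rw [posDef_fin_two_iff, ← sq]
  constructor
  · rintro ⟨ha, hb⟩
    exact (sq_lt_sq₀ (norm_nonneg b) ha.le).mp hb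
  · intro hb
    have ha : 0 < a := (norm_nonneg b).trans_lt hb
    exact ⟨ha, (sq_lt_sq₀ (norm_nonneg b) ha.le).mpr hb⟩

end Matrix

/-- The map `f(z) = α_v + z β_v + z̄ β_vᵀ` of the conic-sector LMI region. -/
noncomputable def conicSectorLMI (γ : ℝ) (z : ℂ) : Matrix (Fin 2) (Fin 2) ℂ :=
  ((-2 * Real.sin γ) • (1 : Matrix (Fin 2) (Fin 2) ℝ)).map Complex.ofReal +
    z • ((!![Real.sin γ, Real.cos γ; -Real.cos γ, Real.sin γ]).map Complex.ofReal) +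
    (starRingEnd ℂ z) •
      (((!![Real.sin γ, Real.cos γ; -Real.cos γ, Real.sin γ])ᵀ).map Complex.ofReal)

theorem neg_conicSectorLMI_eq (γ : ℝ) (z : ℂ) :
    -conicSectorLMI γ z =
      !![((2 * sin γ * (1 - z.re) : ℝ) : ℂ), ((-2 * cos γ * z.im : ℝ) : ℂ) * Complex.I;
        star (((-2 * cos γ * z.im : ℝ) : ℂ) * Complex.I), ((2 * sin γ * (1 - z.re) : ℝ) : ℂ)] := by
  ext i j
  fin_cases i <;> fin_cases j <;> simp [conicSectorLMI, Complex.ext_iff, one_apply] <;> ring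

/-- The conic-sector LMI region: for `γ ∈ (0, π/2)`,
`α_v = −2·sin(γ)·I₂` and `β_v = [[sin γ, cos γ], [−cos γ, sin γ]]`, the Hermitian
matrix `f(z) = α_v + z·β_v + z̄·β_vᵀ` is negative definite iff `z` lies strictly
inside the conic sector with apex at `1` opening towards the left with
half-angle `γ`. -/
theorem conic_sector_lmi_region_iff (γ : ℝ) (hγ0 : 0 < γ) (hγ1 : γ < π / 2)
    (z : ℂ) :
    (-(((-2 * Real.sin γ) • (1 : Matrix (Fin 2) (Fin 2) ℝ)).map Complex.ofReal +
        z • ((!![Real.sin γ, Real.cos γ; -Real.cos γ, Real.sin γ]).map Complex.ofReal) +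
        (starRingEnd ℂ z) •
          (((!![Real.sin γ, Real.cos γ; -Real.cos γ, Real.sin γ])ᵀ).map
            Complex.ofReal))).PosDef ↔
      z.re < 1 ∧ Real.cos γ * |z.im| < Real.sin γ * (1 - z.re) := by
  have hs : 0 < sin γ := sin_pos_of_pos_of_lt_pi hγ0 (by linarith [pi_pos])
  have hc : 0 < cos γ := cos_pos_of_mem_Ioo ⟨by linarith, hγ1⟩
  have hnorm : ‖((-2 * cos γ * z.im : ℝ) : ℂ) * Complex.I‖ = 2 * (cos γ * |z.im|) := by
    rw [norm_mul, Complex.norm_I, mul_one, Complex.norm_real, Real.norm_eq_abs, abs_mul,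
      abs_mul, abs_neg, abs_two, abs_of_pos hc, mul_assoc]
  change (-conicSectorLMI γ z).PosDef ↔ _
  rw [neg_conicSectorLMI_eq, posDef_fin_two_iff_norm_lt, hnorm]
  have hcone_nonneg : 0 ≤ cos γ * |z.im| := by positivity
  constructor
  · intro h
    exact ⟨by nlinarith, by linarith⟩
  · rintro ⟨-, h⟩
    linarith
end
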